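/- arXiv:2501.08927 — 2 statements merged into one kernel-verified Lean document; each statement's English description precedes it below -/
import Mathlib

section
/- Let H be a separable Hilbert space and (X, μ) a σ-finite positive measure space with μ(X) = ∞. If F : X → H is a continuous near-Riesz basis for H, then F does not do phase retrieval. -/
open MeasureTheory ENNReal
open scoped NNReal

/-- `F : X → H` is a continuous frame with bounds `0 < A ≤ B`. -/
def IsContinuousFrame {𝕜 X H : Type*} [RCLike 𝕜] [MeasurableSpace X]
    [NormedAddCommGroup H] [InnerProductSpace 𝕜 H]
    (μ : Measure X) (F : X → H) (A B : ℝ) : Prop :=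
  0 < A ∧ A ≤ B ∧
  (∀ f : H, Measurable fun x => (inner 𝕜 f (F x) : 𝕜)) ∧
  ∀ f : H,
    ENNReal.ofReal (A * ‖f‖ ^ 2) ≤ ∫⁻ x, (‖(inner 𝕜 f (F x) : 𝕜)‖₊ : ℝ≥0∞) ^ 2 ∂μ ∧
    ∫⁻ x, (‖(inner 𝕜 f (F x) : 𝕜)‖₊ : ℝ≥0∞) ^ 2 ∂μ ≤ ENNReal.ofReal (B * ‖f‖ ^ 2)

/-- A Bessel mapping `F : X → H` is μ-complete if the only `f` with `⟪f, F x⟫ = 0`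
μ-a.e. is `f = 0`. -/
def MuComplete {𝕜 X H : Type*} [RCLike 𝕜] [MeasurableSpace X]
    [NormedAddCommGroup H] [InnerProductSpace 𝕜 H]
    (μ : Measure X) (F : X → H) : Prop :=
  ∀ f : H, (∀ᵐ x ∂μ, (inner 𝕜 f (F x) : 𝕜) = 0) → f = 0

/-- `F : X → H` is a continuous Riesz basis: it is μ-complete and there are `A, B > 0`
such that for every `φ ∈ L²(X, μ)` and every measurable `X₁ ⊆ X` of finite measure,
`A·(∫_{X₁} |φ|² dμ)^{1/2} ≤ ‖∫_{X₁} φ x • F x dμ‖ ≤ B·(∫_{X₁} |φ|² dμ)^{1/2}`. -/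
def IsContinuousRieszBasis {𝕜 X H : Type*} [RCLike 𝕜] [MeasurableSpace X]
    [NormedAddCommGroup H] [InnerProductSpace 𝕜 H] [NormedSpace ℝ H] [IsScalarTower ℝ 𝕜 H]
    (μ : Measure X) (F : X → H) : Prop :=
  MuComplete (𝕜 := 𝕜) μ F ∧
  ∃ A B : ℝ, 0 < A ∧ 0 < B ∧
    ∀ φ : X → 𝕜, MemLp φ 2 μ →
      ∀ X₁ : Set X, MeasurableSet X₁ → μ X₁ < ⊤ →
        A * Real.sqrt (∫ x in X₁, ‖φ x‖ ^ 2 ∂μ) ≤ ‖∫ x in X₁, φ x • F x ∂μ‖ ∧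
        ‖∫ x in X₁, φ x • F x ∂μ‖ ≤ B * Real.sqrt (∫ x in X₁, ‖φ x‖ ^ 2 ∂μ)

/-- `F : X → H` is a continuous near-Riesz basis: it is a continuous frame, there is a
measurable `X₁ ⊆ X` with `0 < μ X₁ < ∞` such that `F` restricted to `X \ X₁` is a
continuous Riesz basis, and if `μ X = ∞` then `F` restricted to any measurable set of
finite measure is not μ-complete. -/
def IsContinuousNearRieszBasis {𝕜 X H : Type*} [RCLike 𝕜] [MeasurableSpace X]
    [NormedAddCommGroup H] [InnerProductSpace 𝕜 H] [NormedSpace ℝ H] [IsScalarTower ℝ 𝕜 H]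
    (μ : Measure X) (F : X → H) : Prop :=
  (∃ A B : ℝ, IsContinuousFrame (𝕜 := 𝕜) μ F A B) ∧
  (∃ X₁ : Set X, MeasurableSet X₁ ∧ 0 < μ X₁ ∧ μ X₁ < ⊤ ∧
    IsContinuousRieszBasis (𝕜 := 𝕜) (μ.restrict X₁ᶜ) F) ∧
  (μ Set.univ = ⊤ →
    ∀ Y : Set X, MeasurableSet Y → μ Y < ⊤ → ¬ MuComplete (𝕜 := 𝕜) (μ.restrict Y) F)


/-- `F` does phase retrieval if `‖⟪f, F x⟫‖ = ‖⟪g, F x⟫‖` μ-a.e. forces `f = c • g`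
with `‖c‖ = 1`. -/
def DoesPhaseRetrieval {𝕜 X H : Type*} [RCLike 𝕜] [MeasurableSpace X]
    [NormedAddCommGroup H] [InnerProductSpace 𝕜 H]
    (μ : Measure X) (F : X → H) : Prop :=
  ∀ f g : H, (∀ᵐ x ∂μ, ‖(inner 𝕜 f (F x) : 𝕜)‖ = ‖(inner 𝕜 g (F x) : 𝕜)‖) →
    ∃ c : 𝕜, ‖c‖ = 1 ∧ f = c • g

/-- Let `H` be a separable Hilbert space and `(X, μ)` a σ-finite positive
measure space with `μ X = ∞`. If `F : X → H` is a continuous near-Riesz basis for `H`,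
then `F` does not do phase retrieval. -/
theorem stmt_8 {𝕜 X H : Type*} [RCLike 𝕜] [MeasurableSpace X]
    [NormedAddCommGroup H] [InnerProductSpace 𝕜 H] [NormedSpace ℝ H]
    [IsScalarTower ℝ 𝕜 H] [CompleteSpace H] [TopologicalSpace.SeparableSpace H]
    (μ : Measure X) [SigmaFinite μ]
    (hμ : μ Set.univ = ⊤)
    (F : X → H)
    (hF : IsContinuousNearRieszBasis (𝕜 := 𝕜) μ F) :
    ¬ DoesPhaseRetrieval (𝕜 := 𝕜) μ F := by
  intro hPR
  obtain ⟨⟨A₀, B₀, hA₀, _hAB, hmeas, hframe⟩,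
    ⟨X₁, hX₁m, hX₁pos, hX₁fin, _hcomp, A, B, hA, _hB, hbounds⟩, hInc⟩ := hF
  set ν : Measure X := μ.restrict X₁ᶜ with hνdef
  -- the complement of X₁ has infinite measure
  have hX₁c : μ X₁ᶜ = ⊤ := by
    by_contra hcon
    have h1 : μ Set.univ ≤ μ X₁ + μ X₁ᶜ := by
      rw [← Set.union_compl_self X₁]; exact measure_union_le _ _
    rw [hμ] at h1
    exact absurd (h1.trans_lt (ENNReal.add_lt_top.2 ⟨hX₁fin, lt_top_iff_ne_top.2 hcon⟩))
      (lt_irrefl _)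
  -- choose a finite positive measure piece Y₂ of X₁ᶜ
  obtain ⟨n, hn⟩ : ∃ n, 0 < μ (X₁ᶜ ∩ spanningSets μ n) := by
    by_contra hcon
    push_neg at hcon
    have hU : X₁ᶜ = ⋃ m, X₁ᶜ ∩ spanningSets μ m := by
      rw [← Set.inter_iUnion, iUnion_spanningSets, Set.inter_univ]
    have : μ X₁ᶜ = 0 := by
      rw [hU]
      refine le_antisymm ((measure_iUnion_le _).trans ?_) zero_le
      simp only [nonpos_iff_eq_zero]
      have : ∀ m, μ (X₁ᶜ ∩ spanningSets μ m) = 0 := fun m => le_antisymm (hcon m) zero_le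
      simp [this]
    rw [this] at hX₁c
    exact ENNReal.zero_ne_top hX₁c
  set Y₂ : Set X := X₁ᶜ ∩ spanningSets μ n with hY₂def
  have hY₂m : MeasurableSet Y₂ := hX₁m.compl.inter (measurableSet_spanningSets μ n)
  have hY₂fin : μ Y₂ < ⊤ :=
    (measure_mono Set.inter_subset_right).trans_lt (measure_spanningSets_lt_top μ n)
  have hY₂sub : Y₂ ⊆ X₁ᶜ := Set.inter_subset_left
  have hνY₂ : ν Y₂ = μ Y₂ := by
    rw [hνdef, Measure.restrict_apply hY₂m, Set.inter_eq_self_of_subset_left hY₂sub]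
  -- integrability of synthesis integrands
  have hInt : ∀ (φ : X → 𝕜), MemLp φ 2 ν → ∀ (W : Set X), MeasurableSet W → ν W < ⊤ →
      IntegrableOn (fun x => φ x • F x) W ν := by
    intro φ hφ W hW hWfin
    by_contra hni
    have h0 : ∫ x in W, φ x • F x ∂ν = 0 := integral_undef hni
    have hlow := (hbounds φ hφ W hW hWfin).1
    rw [h0, norm_zero] at hlow
    have hs0 : Real.sqrt (∫ x in W, ‖φ x‖ ^ 2 ∂ν) = 0 := by
      nlinarith [Real.sqrt_nonneg (∫ x in W, ‖φ x‖ ^ 2 ∂ν)]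
    have hile : ∫ x in W, ‖φ x‖ ^ 2 ∂ν ≤ 0 := Real.sqrt_eq_zero'.1 hs0
    have hφ2int : Integrable (fun x => ‖φ x‖ ^ 2) ν :=
      (memLp_two_iff_integrable_sq_norm hφ.1).1 hφ
    have hnn : 0 ≤ᵐ[ν.restrict W] fun x => ‖φ x‖ ^ 2 := ae_of_all _ fun x => sq_nonneg _
    have hieq : ∫ x in W, ‖φ x‖ ^ 2 ∂ν = 0 :=
      le_antisymm hile (integral_nonneg_of_ae hnn)
    have hzero : (fun x => ‖φ x‖ ^ 2) =ᵐ[ν.restrict W] 0 :=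
      (integral_eq_zero_iff_of_nonneg_ae hnn hφ2int.restrict).1 hieq
    have hz2 : (fun x => φ x • F x) =ᵐ[ν.restrict W] 0 := by
      filter_upwards [hzero] with x hx
      have hx0 : ‖φ x‖ = 0 := by
        have : ‖φ x‖ ^ 2 = 0 := hx
        nlinarith [norm_nonneg (φ x)]
      simp [norm_eq_zero.1 hx0]
    exact hni ((integrable_zero _ _ _).congr hz2.symm)
  -- restriction of set integrals via indicators
  have hL1 : ∀ (φ : X → 𝕜) (W U : Set X), MeasurableSet W → W ⊆ U →
      ∫ x in U, (W.indicator φ x) • F x ∂ν = ∫ x in W, φ x • F x ∂ν := by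
    intro φ W U hWm hWU
    have hptw : ∀ x, (W.indicator φ x) • F x = W.indicator (fun y => φ y • F y) x := by
      intro x
      by_cases hx : x ∈ W
      · simp [Set.indicator_of_mem hx]
      · simp [Set.indicator_of_notMem hx]
    simp_rw [hptw]
    rw [setIntegral_indicator hWm, Set.inter_eq_self_of_subset_right hWU]
  -- the submodule of synthesis vectors supported off Y₂
  let M : Submodule 𝕜 H :=
    { carrier := {v | ∃ φ : X → 𝕜, ∃ W : Set X, MemLp φ 2 ν ∧ MeasurableSet W ∧ W ⊆ Y₂ᶜ ∧
        ν W < ⊤ ∧ v = ∫ x in W, φ x • F x ∂ν}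
      zero_mem' := ⟨0, ∅, MemLp.zero, MeasurableSet.empty, Set.empty_subset _, by simp,
        by simp⟩
      add_mem' := by
        rintro v₁ v₂ ⟨φ₁, W₁, hφ₁, hW₁m, hW₁s, hW₁f, rfl⟩ ⟨φ₂, W₂, hφ₂, hW₂m, hW₂s, hW₂f, rfl⟩
        refine ⟨W₁.indicator φ₁ + W₂.indicator φ₂, W₁ ∪ W₂,
          (hφ₁.indicator hW₁m).add (hφ₂.indicator hW₂m), hW₁m.union hW₂m,
          Set.union_subset hW₁s hW₂s,
          (measure_union_le _ _).trans_lt (ENNReal.add_lt_top.2 ⟨hW₁f, hW₂f⟩), ?_⟩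
        have hptw : ∀ x, ((W₁.indicator φ₁ + W₂.indicator φ₂) x) • F x
            = (W₁.indicator φ₁ x) • F x + (W₂.indicator φ₂ x) • F x := by
          intro x; simp [add_smul]
        simp_rw [hptw]
        rw [integral_add
          (hInt _ (hφ₁.indicator hW₁m) _ (hW₁m.union hW₂m)
            ((measure_union_le _ _).trans_lt (ENNReal.add_lt_top.2 ⟨hW₁f, hW₂f⟩)))
          (hInt _ (hφ₂.indicator hW₂m) _ (hW₁m.union hW₂m)
            ((measure_union_le _ _).trans_lt (ENNReal.add_lt_top.2 ⟨hW₁f, hW₂f⟩))),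
          hL1 _ _ _ hW₁m Set.subset_union_left, hL1 _ _ _ hW₂m Set.subset_union_right]
      smul_mem' := by
        rintro c v ⟨φ, W, hφ, hWm, hWs, hWf, rfl⟩
        refine ⟨fun x => c * φ x, W, hφ.const_mul c, hWm, hWs, hWf, ?_⟩
        simp_rw [mul_smul]
        rw [integral_smul] }
  set u : H := ∫ x in Y₂, (1 : 𝕜) • F x ∂ν with hudef
  have hνY₂fin : ν Y₂ < ⊤ := by rw [hνY₂]; exact hY₂fin
  have hνY₂pos : 0 < ν Y₂ := by rw [hνY₂]; exact hn
  have hψ : MemLp (Y₂.indicator fun _ => (1 : 𝕜)) 2 ν :=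
    memLp_indicator_const 2 hY₂m 1 (Or.inr hνY₂fin.ne)
  set δ : ℝ := A * Real.sqrt ((ν Y₂).toReal) with hδdef
  have hδpos : 0 < δ :=
    mul_pos hA (Real.sqrt_pos.2 (ENNReal.toReal_pos hνY₂pos.ne' hνY₂fin.ne))
  -- distance from u to M is at least δ
  have hdist : ∀ v ∈ M, δ ≤ ‖u - v‖ := by
    rintro v ⟨φ, W, hφ, hWm, hWs, hWf, rfl⟩
    set χ : X → 𝕜 := fun x => Y₂.indicator (fun _ => (1 : 𝕜)) x - W.indicator φ x with hχdef
    have hχ : MemLp χ 2 ν := hψ.sub (hφ.indicator hWm)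
    have hUm : MeasurableSet (Y₂ ∪ W) := hY₂m.union hWm
    have hUfin : ν (Y₂ ∪ W) < ⊤ :=
      (measure_union_le _ _).trans_lt (ENNReal.add_lt_top.2 ⟨hνY₂fin, hWf⟩)
    have hsplit : ∫ x in Y₂ ∪ W, χ x • F x ∂ν = u - ∫ x in W, φ x • F x ∂ν := by
      have hptw : ∀ x, χ x • F x
          = (Y₂.indicator (fun _ => (1 : 𝕜)) x) • F x - (W.indicator φ x) • F x := by
        intro x; simp [hχdef, sub_smul]
      simp_rw [hptw]
      rw [integral_sub (hInt _ hψ _ hUm hUfin) (hInt _ (hφ.indicator hWm) _ hUm hUfin),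
        hL1 _ _ _ hY₂m Set.subset_union_left, hL1 _ _ _ hWm Set.subset_union_right]
    have hlow := (hbounds χ hχ (Y₂ ∪ W) hUm hUfin).1
    rw [hsplit] at hlow
    refine le_trans ?_ hlow
    have hχint : IntegrableOn (fun x => ‖χ x‖ ^ 2) (Y₂ ∪ W) ν :=
      ((memLp_two_iff_integrable_sq_norm hχ.1).1 hχ).integrableOn
    have heqY : ∫ x in Y₂, ‖χ x‖ ^ 2 ∂ν = (ν Y₂).toReal := by
      have hEq : Set.EqOn (fun x => ‖χ x‖ ^ 2) (fun _ => (1 : ℝ)) Y₂ := by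
        intro x hx
        have hxW : x ∉ W := fun hxw => (hWs hxw) hx
        simp [hχdef, Set.indicator_of_mem hx, Set.indicator_of_notMem hxW]
      rw [setIntegral_congr_fun hY₂m hEq, setIntegral_const, smul_eq_mul, mul_one]; rfl
    have hmono : (ν Y₂).toReal ≤ ∫ x in Y₂ ∪ W, ‖χ x‖ ^ 2 ∂ν := by
      rw [← heqY]
      exact setIntegral_mono_set hχint (ae_of_all _ fun x => sq_nonneg _)
        (HasSubset.Subset.eventuallyLE Set.subset_union_left)
    rw [hδdef]
    exact mul_le_mul_of_nonneg_left (Real.sqrt_le_sqrt hmono) hA.le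
  set K : Submodule 𝕜 H := M.topologicalClosure with hKdef
  have hKdist : ∀ v ∈ K, δ ≤ ‖u - v‖ := by
    intro v hv
    have hclosed : IsClosed {w : H | δ ≤ ‖u - w‖} :=
      isClosed_le continuous_const ((continuous_const.sub continuous_id).norm)
    have hsub : (M : Set H) ⊆ {w : H | δ ≤ ‖u - w‖} := fun w hw => hdist w hw
    have : v ∈ closure (M : Set H) := hv
    exact closure_minimal hsub hclosed this
  haveI : CompleteSpace K := M.isClosed_topologicalClosure.completeSpace_coe
  set g : H := u - (K.orthogonalProjection u : H) with hgdef
  have hgK : g ∈ Kᗮ := K.sub_starProjection_mem_orthogonal u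
  have hg0 : g ≠ 0 := by
    intro hcon
    have huK : u ∈ K := by
      have := sub_eq_zero.1 hcon
      rw [this]
      exact (K.orthogonalProjection u).2
    have := hKdist u huK
    rw [sub_self, norm_zero] at this
    exact absurd (hδpos.trans_le this) (lt_irrefl _)
  have horth : ∀ v ∈ M, (inner 𝕜 g v : 𝕜) = 0 := by
    intro v hv
    have hvK : v ∈ K := Submodule.le_topologicalClosure M hv
    exact inner_eq_zero_symm.1 ((Submodule.mem_orthogonal K g).1 hgK v hvK)
  -- the function h = ⟪g, F ·⟫ is in L²(ν)
  have hhmeas : Measurable fun x => (inner 𝕜 g (F x) : 𝕜) := hmeas g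
  have hh2 : MemLp (fun x => (inner 𝕜 g (F x) : 𝕜)) 2 ν := by
    refine ⟨hhmeas.aestronglyMeasurable, ?_⟩
    have hb := (hframe g).2
    have hle : ∫⁻ x, (‖(inner 𝕜 g (F x) : 𝕜)‖₊ : ℝ≥0∞) ^ 2 ∂ν
        ≤ ∫⁻ x, (‖(inner 𝕜 g (F x) : 𝕜)‖₊ : ℝ≥0∞) ^ 2 ∂μ :=
      lintegral_mono' Measure.restrict_le_self le_rfl
    have hfin : ∫⁻ x, (‖(inner 𝕜 g (F x) : 𝕜)‖₊ : ℝ≥0∞) ^ 2 ∂ν < ⊤ :=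
      (hle.trans hb).trans_lt ENNReal.ofReal_lt_top
    rw [eLpNorm_eq_lintegral_rpow_enorm_toReal (by norm_num) (by norm_num)]
    refine ENNReal.rpow_lt_top_of_nonneg (by norm_num) ?_
    have heq : ∫⁻ x, ‖(inner 𝕜 g (F x) : 𝕜)‖ₑ ^ (2 : ℝ≥0∞).toReal ∂ν
        = ∫⁻ x, (‖(inner 𝕜 g (F x) : 𝕜)‖₊ : ℝ≥0∞) ^ 2 ∂ν := by
      apply lintegral_congr
      intro x
      rw [show ((2 : ℝ≥0∞)).toReal = ((2 : ℕ) : ℝ) by norm_num, ENNReal.rpow_natCast]; rfl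
    rw [heq]
    exact hfin.ne
  have hφh : MemLp (fun x => (starRingEnd 𝕜) (inner 𝕜 g (F x) : 𝕜)) 2 ν := by
    refine ⟨((RCLike.continuous_conj.measurable).comp hhmeas).aestronglyMeasurable, ?_⟩
    refine lt_of_le_of_lt (eLpNorm_mono_ae (ae_of_all _ fun x => ?_)) hh2.2
    rw [RCLike.norm_conj]
  -- g is orthogonal to F a.e. off Y₂ (within X₁ᶜ)
  have hker : ∀ m : ℕ, ∀ᵐ x ∂ν.restrict (Y₂ᶜ ∩ spanningSets μ m), (inner 𝕜 g (F x) : 𝕜) = 0 := by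
    intro m
    set W : Set X := Y₂ᶜ ∩ spanningSets μ m with hWdef
    have hWm : MeasurableSet W := hY₂m.compl.inter (measurableSet_spanningSets μ m)
    have hWfin : ν W < ⊤ := by
      refine lt_of_le_of_lt ?_ (measure_spanningSets_lt_top μ m)
      calc ν W ≤ μ W := Measure.le_iff'.1 Measure.restrict_le_self W
        _ ≤ μ (spanningSets μ m) := measure_mono Set.inter_subset_right
    have hIntW := hInt _ hφh W hWm hWfin
    have hvM : (∫ x in W, (starRingEnd 𝕜) (inner 𝕜 g (F x) : 𝕜) • F x ∂ν) ∈ M :=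
      ⟨_, W, hφh, hWm, Set.inter_subset_left, hWfin, rfl⟩
    have h0 : ∫ x in W, (inner 𝕜 g ((starRingEnd 𝕜) (inner 𝕜 g (F x) : 𝕜) • F x) : 𝕜) ∂ν = 0 := by
      rw [integral_inner hIntW g]
      exact horth _ hvM
    have heq : ∀ x, (inner 𝕜 g ((starRingEnd 𝕜) (inner 𝕜 g (F x) : 𝕜) • F x) : 𝕜)
        = ((‖(inner 𝕜 g (F x) : 𝕜)‖ ^ 2 : ℝ) : 𝕜) := by
      intro x
      rw [inner_smul_right, mul_comm, RCLike.mul_conj]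
      norm_cast
    simp_rw [heq] at h0
    rw [integral_ofReal] at h0
    have h0' : ∫ x in W, ‖(inner 𝕜 g (F x) : 𝕜)‖ ^ 2 ∂ν = 0 := by exact_mod_cast h0
    have hnn : 0 ≤ᵐ[ν.restrict W] fun x => ‖(inner 𝕜 g (F x) : 𝕜)‖ ^ 2 :=
      ae_of_all _ fun x => sq_nonneg _
    have hint2 : Integrable (fun x => ‖(inner 𝕜 g (F x) : 𝕜)‖ ^ 2) (ν.restrict W) :=
      ((memLp_two_iff_integrable_sq_norm hhmeas.aestronglyMeasurable).1 hh2).restrict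
    have hae0 := (integral_eq_zero_iff_of_nonneg_ae hnn hint2).1 h0'
    filter_upwards [hae0] with x hx
    have : ‖(inner 𝕜 g (F x) : 𝕜)‖ ^ 2 = 0 := hx
    have hnrm : ‖(inner 𝕜 g (F x) : 𝕜)‖ = 0 := by nlinarith [norm_nonneg (inner 𝕜 g (F x) : 𝕜)]
    exact norm_eq_zero.1 hnrm
  have hgae : ∀ᵐ x ∂μ, x ∈ X₁ᶜ → x ∈ Y₂ᶜ → (inner 𝕜 g (F x) : 𝕜) = 0 := by
    have hU : (⋃ m, Y₂ᶜ ∩ spanningSets μ m) = Y₂ᶜ := by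
      rw [← Set.inter_iUnion, iUnion_spanningSets, Set.inter_univ]
    have h1 : ∀ᵐ x ∂ν.restrict Y₂ᶜ, (inner 𝕜 g (F x) : 𝕜) = 0 := by
      rw [← hU]
      exact (ae_restrict_iUnion_iff _ _).2 fun m => hker m
    have h2 : ∀ᵐ x ∂ν, x ∈ Y₂ᶜ → (inner 𝕜 g (F x) : 𝕜) = 0 :=
      (ae_restrict_iff' hY₂m.compl).1 h1
    exact (ae_restrict_iff' hX₁m.compl).1 h2
  -- get f ≠ 0 orthogonal to F a.e. on X₁ ∪ Y₂
  obtain ⟨f, hfae, hf0⟩ : ∃ f : H,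
      (∀ᵐ x ∂μ.restrict (X₁ ∪ Y₂), (inner 𝕜 f (F x) : 𝕜) = 0) ∧ f ≠ 0 := by
    have hYfin : μ (X₁ ∪ Y₂) < ⊤ :=
      (measure_union_le _ _).trans_lt (ENNReal.add_lt_top.2 ⟨hX₁fin, hY₂fin⟩)
    have hnc := hInc hμ (X₁ ∪ Y₂) (hX₁m.union hY₂m) hYfin
    rw [MuComplete] at hnc
    push_neg at hnc
    exact hnc
  have hfae' : ∀ᵐ x ∂μ, x ∈ X₁ ∪ Y₂ → (inner 𝕜 f (F x) : 𝕜) = 0 :=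
    (ae_restrict_iff' (hX₁m.union hY₂m)).1 hfae
  -- apply phase retrieval to f + g and f - g
  have hae : ∀ᵐ x ∂μ, ‖(inner 𝕜 (f + g) (F x) : 𝕜)‖ = ‖(inner 𝕜 (f - g) (F x) : 𝕜)‖ := by
    filter_upwards [hfae', hgae] with x h1 h2
    by_cases hx : x ∈ X₁ ∪ Y₂
    · simp [inner_add_left, inner_sub_left, h1 hx]
    · have hx1 : x ∈ X₁ᶜ := fun hh => hx (Or.inl hh)
      have hx2 : x ∈ Y₂ᶜ := fun hh => hx (Or.inr hh)
      simp [inner_add_left, inner_sub_left, h2 hx1 hx2]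
  obtain ⟨c, _hc1, hc2⟩ := hPR (f + g) (f - g) hae
  by_cases hc : c = 1
  · rw [hc, one_smul, sub_eq_add_neg] at hc2
    have hgg : g = -g := add_left_cancel hc2
    have hgg0 : g + g = 0 := by nth_rewrite 2 [hgg]; simp
    have h2g : (2 : ℝ) • g = 0 := by rw [two_smul]; exact hgg0
    rcases smul_eq_zero.1 h2g with h | h
    · norm_num at h
    · exact hg0 h
  · -- f is a multiple of g, hence ⟪f, F x⟫ = 0 a.e., contradicting the frame bound
    set lam : 𝕜 := (1 - c)⁻¹ * -(1 + c) with hlamdef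
    have hsub : (1 - c) • f = (-(1 + c)) • g := by
      linear_combination (norm := module) hc2
    have hflam : f = lam • g := by
      have hne : (1 - c) ≠ 0 := sub_ne_zero.2 fun hh => hc hh.symm
      calc f = (1 - c)⁻¹ • ((1 - c) • f) := by
            rw [smul_smul, inv_mul_cancel₀ hne, one_smul]
        _ = (1 - c)⁻¹ • ((-(1 + c)) • g) := by rw [hsub]
        _ = lam • g := by rw [smul_smul, hlamdef]
    have hfzero : ∀ᵐ x ∂μ, (inner 𝕜 f (F x) : 𝕜) = 0 := by
      filter_upwards [hfae', hgae] with x h1 h2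
      by_cases hx : x ∈ X₁ ∪ Y₂
      · exact h1 hx
      · have hx1 : x ∈ X₁ᶜ := fun hh => hx (Or.inl hh)
        have hx2 : x ∈ Y₂ᶜ := fun hh => hx (Or.inr hh)
        rw [hflam, inner_smul_left, h2 hx1 hx2, mul_zero]
    have hlint : ∫⁻ x, (‖(inner 𝕜 f (F x) : 𝕜)‖₊ : ℝ≥0∞) ^ 2 ∂μ = 0 := by
      rw [← lintegral_zero]
      apply lintegral_congr_ae
      filter_upwards [hfzero] with x hx
      simp [hx]
    have hlow := (hframe f).1
    rw [hlint] at hlow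
    have h2 : ENNReal.ofReal (A₀ * ‖f‖ ^ 2) = 0 := le_antisymm hlow zero_le
    rw [ENNReal.ofReal_eq_zero] at h2
    have h3 : ‖f‖ ^ 2 = 0 := by nlinarith [sq_nonneg ‖f‖, norm_nonneg f]
    have h4 : ‖f‖ = 0 := by nlinarith [norm_nonneg f]
    exact hf0 (norm_eq_zero.1 h4)
end

section
/- Let H be an infinite-dimensional separable Hilbert space and (X, μ) a σ-finite positive measure space with μ(X) = ∞. Suppose F : X → H is a continuous frame with bounds A, B that does phase retrieval, and suppose that for every measurable subset Y ⊆ X with μ(Y) < ∞ the restriction F|_Y is not μ-complete. Then for any ε with 0 < ε < A there exists a continuous frame G : X → H such that G does not do phase retrieval and ∫_X ‖F(x) − G(x)‖² dμ(x) < ε. -/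
open MeasureTheory ENNReal
open scoped NNReal

private lemma ennreal_add_sq_le (a b : ℝ≥0∞) : (a + b) ^ 2 ≤ 4 * a ^ 2 + 4 * b ^ 2 := by
  have h1 : a + b ≤ 2 * max a b := by
    calc a + b ≤ max a b + max a b := add_le_add (le_max_left a b) (le_max_right a b)
    _ = 2 * max a b := (two_mul _).symm
  have h2 : (max a b) ^ 2 ≤ a ^ 2 + b ^ 2 := by
    rcases le_total a b with h | h
    · rw [max_eq_right h]; exact le_add_self
    · rw [max_eq_left h]; exact le_self_add
  calc (a + b) ^ 2 ≤ (2 * max a b) ^ 2 := by gcongr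
    _ = 4 * (max a b) ^ 2 := by rw [mul_pow]; norm_num
    _ ≤ 4 * (a ^ 2 + b ^ 2) := by gcongr
    _ = 4 * a ^ 2 + 4 * b ^ 2 := by ring

private lemma ennreal_sqrt_sq (t : ℝ≥0∞) : (t ^ (1/2 : ℝ)) ^ (2 : ℕ) = t := by
  rw [← ENNReal.rpow_two, ← ENNReal.rpow_mul]; norm_num

private lemma ennreal_sqrt_ofReal {r : ℝ} (hr : 0 ≤ r) :
    (ENNReal.ofReal r) ^ (1/2 : ℝ) = ENNReal.ofReal (Real.sqrt r) := by
  rw [ENNReal.ofReal_rpow_of_nonneg hr (by norm_num : (0:ℝ) ≤ 1/2), Real.sqrt_eq_rpow]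

/-- Let `H` be an infinite-dimensional separable Hilbert space and `(X, μ)`
a σ-finite positive measure space with `μ X = ∞`. Suppose `F : X → H` is a continuous
frame with bounds `A, B` that does phase retrieval, and suppose that for every measurable
`Y ⊆ X` with `μ Y < ∞` the restriction `F|_Y` is not μ-complete. Then for any `ε` with
`0 < ε < A` there exists a continuous frame `G : X → H` such that `G` does not do phase
retrieval and `∫_X ‖F x − G x‖² dμ(x) < ε`. -/
theorem stmt_9 {𝕜 X H : Type*} [RCLike 𝕜] [MeasurableSpace X]
    [NormedAddCommGroup H] [InnerProductSpace 𝕜 H] [CompleteSpace H]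
    [TopologicalSpace.SeparableSpace H]
    (hH : ¬ FiniteDimensional 𝕜 H)
    (μ : Measure X) [SigmaFinite μ]
    (hμ : μ Set.univ = ⊤)
    (F : X → H) (A B : ℝ)
    (hF : IsContinuousFrame (𝕜 := 𝕜) μ F A B)
    (hFpr : DoesPhaseRetrieval (𝕜 := 𝕜) μ F)
    (hFfin : ∀ Y : Set X, MeasurableSet Y → μ Y < ⊤ →
      ¬ MuComplete (𝕜 := 𝕜) (μ.restrict Y) F)
    (ε : ℝ) (hε : 0 < ε) (hεA : ε < A) :
    ∃ G : X → H,
      (∃ A' B' : ℝ, IsContinuousFrame (𝕜 := 𝕜) μ G A' B') ∧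
      ¬ DoesPhaseRetrieval (𝕜 := 𝕜) μ G ∧
      ∫⁻ x, (‖F x - G x‖₊ : ℝ≥0∞) ^ 2 ∂μ < ENNReal.ofReal ε := by
  obtain ⟨hA, hAB, hmeas, hbounds⟩ := hF
  have hB : 0 < B := lt_of_lt_of_le hA hAB
  set δ : ℝ := ε / 2 with hδdef
  have hδpos : 0 < δ := by positivity
  have hδε : δ < ε := by simp only [hδdef]; linarith
  have hδA : δ < A := by linarith
  -- a unit vector f₁
  have hvex : ∃ v : H, v ≠ 0 := by
    by_contra h
    push_neg at h
    have : Subsingleton H := ⟨fun a b => by rw [h a, h b]⟩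
    exact hH inferInstance
  obtain ⟨v, hv⟩ := hvex
  set f₁ : H := ((‖v‖ : 𝕜))⁻¹ • v with hf₁def
  have hf₁ : ‖f₁‖ = 1 := by
    rw [hf₁def, norm_smul, norm_inv, RCLike.norm_ofReal, abs_of_nonneg (norm_nonneg v),
      inv_mul_cancel₀ (norm_ne_zero_iff.mpr hv)]
  have hf₁inner : (inner 𝕜 f₁ f₁ : 𝕜) = 1 := by
    rw [inner_self_eq_norm_sq_to_K, hf₁]; norm_num
  -- the energy density of f₁
  set e : X → ℝ≥0∞ := fun x => (‖(inner 𝕜 f₁ (F x) : 𝕜)‖₊ : ℝ≥0∞) ^ 2 with hedef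
  have hemeas : Measurable e := by
    exact ((hmeas f₁).nnnorm.coe_nnreal_ennreal).pow_const 2
  -- choose a finite measure set Y capturing most of the energy of f₁
  obtain ⟨Y, hYm, hYfin, hYtail⟩ :
      ∃ Y : Set X, MeasurableSet Y ∧ μ Y < ⊤ ∧
        ∫⁻ x in Yᶜ, e x ∂μ < ENNReal.ofReal δ := by
    set ν : Measure X := μ.withDensity e with hνdef
    have hν : ∀ s : Set X, MeasurableSet s → ν s = ∫⁻ x in s, e x ∂μ := fun s hs =>
      withDensity_apply e hs
    have hνfin : ν Set.univ ≠ ⊤ := by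
      rw [hν _ MeasurableSet.univ, Measure.restrict_univ]
      exact ne_of_lt (lt_of_le_of_lt (hbounds f₁).2 ofReal_lt_top)
    have htendsto : Filter.Tendsto (fun n => ν ((spanningSets μ n)ᶜ)) Filter.atTop
        (nhds (ν (⋂ n, (spanningSets μ n)ᶜ))) := by
      exact tendsto_measure_iInter_atTop
        (fun n => ((measurableSet_spanningSets μ n).compl).nullMeasurableSet)
        (fun n m h => Set.compl_subset_compl.mpr (monotone_spanningSets μ h))
        ⟨0, ne_of_lt (lt_of_le_of_lt (measure_mono (Set.subset_univ _))
          (lt_top_iff_ne_top.mpr hνfin))⟩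
    have hinter : (⋂ n, (spanningSets μ n)ᶜ) = ∅ := by
      rw [← Set.compl_iUnion, iUnion_spanningSets, Set.compl_univ]
    rw [hinter, measure_empty] at htendsto
    have hev := htendsto.eventually_lt_const (ENNReal.ofReal_pos.mpr hδpos)
    obtain ⟨n, hn⟩ := hev.exists
    exact ⟨spanningSets μ n, measurableSet_spanningSets μ n, measure_spanningSets_lt_top μ n,
      by rwa [hν _ (measurableSet_spanningSets μ n).compl] at hn⟩
  -- a nonzero vector f₂ vanishing a.e. on Y
  have h2 := hFfin Y hYm hYfin
  unfold MuComplete at h2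
  push_neg at h2
  obtain ⟨f₂, hf₂ae, hf₂ne⟩ := h2
  have hf₂' : ∀ᵐ x ∂μ, x ∈ Y → (inner 𝕜 f₂ (F x) : 𝕜) = 0 := (ae_restrict_iff' hYm).mp hf₂ae
  -- the perturbed frame G
  set G : X → H := fun x => F x - Set.indicator Yᶜ (fun x => (inner 𝕜 f₁ (F x) : 𝕜) • f₁) x
    with hGdef
  set bv : H → X → 𝕜 := fun g x =>
    Set.indicator Yᶜ (fun x => (inner 𝕜 f₁ (F x) : 𝕜) * (inner 𝕜 g f₁ : 𝕜)) x with hbvdef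
  have hGinner : ∀ (g : H) (x : X), (inner 𝕜 g (G x) : 𝕜) = (inner 𝕜 g (F x) : 𝕜) - bv g x := by
    intro g x
    by_cases hx : x ∈ Yᶜ
    · simp [hGdef, hbvdef, Set.indicator_of_mem hx, inner_sub_right, inner_smul_right]
    · simp [hGdef, hbvdef, Set.indicator_of_notMem hx]
  have hbvmeas : ∀ g : H, Measurable (bv g) :=
    fun g => ((hmeas f₁).mul measurable_const).indicator hYm.compl
  have hGmeas : ∀ g : H, Measurable fun x => (inner 𝕜 g (G x) : 𝕜) := by
    intro g
    have : (fun x => (inner 𝕜 g (G x) : 𝕜)) = fun x => (inner 𝕜 g (F x) : 𝕜) - bv g x :=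
      funext (hGinner g)
    rw [this]
    exact (hmeas g).sub (hbvmeas g)
  have hG_onY : ∀ x ∈ Y, G x = F x := by
    intro x hx
    simp [hGdef, Set.indicator_of_notMem (by simpa using hx : x ∉ Yᶜ)]
  have hG_f₁ : ∀ x ∉ Y, (inner 𝕜 f₁ (G x) : 𝕜) = 0 := by
    intro x hx
    rw [hGinner, hbvdef]
    simp [Set.indicator_of_mem (Set.mem_compl hx), hf₁inner, hf₁]
  -- bound the perturbation term
  have hbv_int : ∀ g : H,
      ∫⁻ x, (‖bv g x‖₊ : ℝ≥0∞) ^ 2 ∂μ ≤ ENNReal.ofReal (δ * ‖g‖ ^ 2) := by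
    intro g
    have hsq : ∀ x, (‖bv g x‖₊ : ℝ≥0∞) ^ 2 =
        Set.indicator Yᶜ (fun x => e x * (‖(inner 𝕜 g f₁ : 𝕜)‖₊ : ℝ≥0∞) ^ 2) x := by
      intro x
      by_cases hx : x ∈ Yᶜ
      · simp [hbvdef, hedef, Set.indicator_of_mem hx, nnnorm_mul, mul_pow, ENNReal.coe_mul]
      · simp [hbvdef, Set.indicator_of_notMem hx]
    rw [lintegral_congr hsq, lintegral_indicator hYm.compl _]
    have hC : (‖(inner 𝕜 g f₁ : 𝕜)‖₊ : ℝ≥0∞) ^ 2 ≤ ENNReal.ofReal (‖g‖ ^ 2) := by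
      have h1 : ‖(inner 𝕜 g f₁ : 𝕜)‖ ≤ ‖g‖ := by
        simpa [hf₁] using norm_inner_le_norm (𝕜 := 𝕜) g f₁
      have h2 : (‖(inner 𝕜 g f₁ : 𝕜)‖₊ : ℝ≥0∞) ≤ ENNReal.ofReal ‖g‖ := by
        rw [← ENNReal.ofReal_coe_nnreal, coe_nnnorm]
        exact ENNReal.ofReal_le_ofReal h1
      calc (‖(inner 𝕜 g f₁ : 𝕜)‖₊ : ℝ≥0∞) ^ 2 ≤ (ENNReal.ofReal ‖g‖) ^ 2 := by gcongr
        _ = ENNReal.ofReal (‖g‖ ^ 2) := by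
            rw [← ENNReal.ofReal_pow (norm_nonneg g)]
    calc ∫⁻ x in Yᶜ, e x * (‖(inner 𝕜 g f₁ : 𝕜)‖₊ : ℝ≥0∞) ^ 2 ∂μ
        = (∫⁻ x in Yᶜ, e x ∂μ) * (‖(inner 𝕜 g f₁ : 𝕜)‖₊ : ℝ≥0∞) ^ 2 :=
          lintegral_mul_const _ hemeas
      _ ≤ ENNReal.ofReal δ * ENNReal.ofReal (‖g‖ ^ 2) := by
          exact mul_le_mul' hYtail.le hC
      _ = ENNReal.ofReal (δ * ‖g‖ ^ 2) := by
          rw [← ENNReal.ofReal_mul hδpos.le]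
    -- upper frame bound for G
  have hupper : ∀ g : H, ∫⁻ x, (‖(inner 𝕜 g (G x) : 𝕜)‖₊ : ℝ≥0∞) ^ 2 ∂μ ≤
      ENNReal.ofReal ((8 * B) * ‖g‖ ^ 2) := by
    intro g
    have hmF : Measurable fun x => (‖(inner 𝕜 g (F x) : 𝕜)‖₊ : ℝ≥0∞) ^ 2 :=
      ((hmeas g).nnnorm.coe_nnreal_ennreal).pow_const 2
    have hmb : Measurable fun x => (‖bv g x‖₊ : ℝ≥0∞) ^ 2 :=
      (((hbvmeas g)).nnnorm.coe_nnreal_ennreal).pow_const 2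
    have hpt : ∀ x, (‖(inner 𝕜 g (G x) : 𝕜)‖₊ : ℝ≥0∞) ^ 2 ≤
        4 * (‖(inner 𝕜 g (F x) : 𝕜)‖₊ : ℝ≥0∞) ^ 2 + 4 * (‖bv g x‖₊ : ℝ≥0∞) ^ 2 := by
      intro x
      have h1 : (‖(inner 𝕜 g (G x) : 𝕜)‖₊ : ℝ≥0∞) ≤
          (‖(inner 𝕜 g (F x) : 𝕜)‖₊ : ℝ≥0∞) + (‖bv g x‖₊ : ℝ≥0∞) := by
        rw [hGinner]
        exact_mod_cast nnnorm_sub_le _ _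
      calc (‖(inner 𝕜 g (G x) : 𝕜)‖₊ : ℝ≥0∞) ^ 2
          ≤ ((‖(inner 𝕜 g (F x) : 𝕜)‖₊ : ℝ≥0∞) + (‖bv g x‖₊ : ℝ≥0∞)) ^ 2 := by gcongr
        _ ≤ _ := ennreal_add_sq_le _ _
    calc ∫⁻ x, (‖(inner 𝕜 g (G x) : 𝕜)‖₊ : ℝ≥0∞) ^ 2 ∂μ
        ≤ ∫⁻ x, (4 * (‖(inner 𝕜 g (F x) : 𝕜)‖₊ : ℝ≥0∞) ^ 2
            + 4 * (‖bv g x‖₊ : ℝ≥0∞) ^ 2) ∂μ := lintegral_mono hpt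
      _ = 4 * (∫⁻ x, (‖(inner 𝕜 g (F x) : 𝕜)‖₊ : ℝ≥0∞) ^ 2 ∂μ)
            + 4 * ∫⁻ x, (‖bv g x‖₊ : ℝ≥0∞) ^ 2 ∂μ := by
          rw [lintegral_add_left (hmF.const_mul 4), lintegral_const_mul 4 hmF,
            lintegral_const_mul 4 hmb]
      _ ≤ 4 * ENNReal.ofReal (B * ‖g‖ ^ 2) + 4 * ENNReal.ofReal (δ * ‖g‖ ^ 2) := by
          gcongr
          · exact (hbounds g).2
          · exact hbv_int g
      _ ≤ ENNReal.ofReal ((8 * B) * ‖g‖ ^ 2) := by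
          rw [show (4 : ℝ≥0∞) = ENNReal.ofReal 4 by simp,
            ← ENNReal.ofReal_mul (by norm_num), ← ENNReal.ofReal_mul (by norm_num),
            ← ENNReal.ofReal_add (by positivity) (by positivity)]
          exact ENNReal.ofReal_le_ofReal (by nlinarith [sq_nonneg ‖g‖])
  -- lower frame bound for G
  have hsqrtδA : Real.sqrt δ < Real.sqrt A := Real.sqrt_lt_sqrt hδpos.le hδA
  set A' : ℝ := (Real.sqrt A - Real.sqrt δ) ^ 2 with hA'def
  have hA'pos : 0 < A' := pow_pos (sub_pos.mpr hsqrtδA) 2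
  have hsqrt_mul : ∀ (r : ℝ) (g : H), 0 ≤ r →
      Real.sqrt (r * ‖g‖ ^ 2) = Real.sqrt r * ‖g‖ := by
    intro r g hr
    rw [Real.sqrt_mul hr, Real.sqrt_sq (norm_nonneg g)]
  have hlower : ∀ g : H, ENNReal.ofReal (A' * ‖g‖ ^ 2) ≤
      ∫⁻ x, (‖(inner 𝕜 g (G x) : 𝕜)‖₊ : ℝ≥0∞) ^ 2 ∂μ := by
    intro g
    set wf : X → ℝ≥0∞ := fun x => (‖(inner 𝕜 g (G x) : 𝕜)‖₊ : ℝ≥0∞) with hwfdef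
    set bf : X → ℝ≥0∞ := fun x => (‖bv g x‖₊ : ℝ≥0∞) with hbfdef
    set uf : X → ℝ≥0∞ := fun x => (‖(inner 𝕜 g (F x) : 𝕜)‖₊ : ℝ≥0∞) with hufdef
    set wI : ℝ≥0∞ := ∫⁻ x, wf x ^ 2 ∂μ with hwIdef
    set bI : ℝ≥0∞ := ∫⁻ x, bf x ^ 2 ∂μ with hbIdef
    set uI : ℝ≥0∞ := ∫⁻ x, uf x ^ 2 ∂μ with huIdef
    have hwm : AEMeasurable wf μ := ((hGmeas g).nnnorm.coe_nnreal_ennreal).aemeasurable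
    have hbm : AEMeasurable bf μ := ((hbvmeas g).nnnorm.coe_nnreal_ennreal).aemeasurable
    have hconv : ∀ h : X → ℝ≥0∞, (∫⁻ x, h x ^ (2:ℝ) ∂μ) = ∫⁻ x, h x ^ 2 ∂μ :=
      fun h => lintegral_congr fun x => ENNReal.rpow_two _
    have hmink : uI ^ (1/2:ℝ) ≤ wI ^ (1/2:ℝ) + bI ^ (1/2:ℝ) := by
      have key := ENNReal.lintegral_Lp_add_le (μ := μ) hwm hbm one_le_two
      rw [hconv wf, hconv bf, hconv (wf + bf)] at key
      refine le_trans ?_ key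
      apply ENNReal.rpow_le_rpow _ (by norm_num)
      rw [huIdef]
      refine lintegral_mono fun x => ?_
      have hpt : uf x ≤ (wf + bf) x := by
        have heq : (inner 𝕜 g (F x) : 𝕜) = inner 𝕜 g (G x) + bv g x := by
          rw [hGinner]; ring
        simp only [Pi.add_apply, hufdef, hwfdef, hbfdef, heq]
        exact_mod_cast nnnorm_add_le _ _
      gcongr
    have hu_lb : ENNReal.ofReal (Real.sqrt A * ‖g‖) ≤ uI ^ (1/2:ℝ) := by
      have h2 : (ENNReal.ofReal (A * ‖g‖ ^ 2)) ^ (1/2:ℝ) ≤ uI ^ (1/2:ℝ) :=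
        ENNReal.rpow_le_rpow (hbounds g).1 (by norm_num)
      rwa [ennreal_sqrt_ofReal (by positivity), hsqrt_mul A g hA.le] at h2
    have hb_ub : bI ^ (1/2:ℝ) ≤ ENNReal.ofReal (Real.sqrt δ * ‖g‖) := by
      have h2 : bI ^ (1/2:ℝ) ≤ (ENNReal.ofReal (δ * ‖g‖ ^ 2)) ^ (1/2:ℝ) :=
        ENNReal.rpow_le_rpow (hbv_int g) (by norm_num)
      rwa [ennreal_sqrt_ofReal (by positivity), hsqrt_mul δ g hδpos.le] at h2
    have hcomb : ENNReal.ofReal ((Real.sqrt A - Real.sqrt δ) * ‖g‖) ≤ wI ^ (1/2:ℝ) := by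
      have h3 : ENNReal.ofReal (Real.sqrt A * ‖g‖) ≤
          wI ^ (1/2:ℝ) + ENNReal.ofReal (Real.sqrt δ * ‖g‖) :=
        le_trans hu_lb (le_trans hmink (add_le_add le_rfl hb_ub))
      have h4 := tsub_le_iff_right.mpr h3
      rwa [← ENNReal.ofReal_sub _ (by positivity),
        show Real.sqrt A * ‖g‖ - Real.sqrt δ * ‖g‖ = (Real.sqrt A - Real.sqrt δ) * ‖g‖
          by ring] at h4
    calc ENNReal.ofReal (A' * ‖g‖ ^ 2)
        = (ENNReal.ofReal ((Real.sqrt A - Real.sqrt δ) * ‖g‖)) ^ (2:ℕ) := by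
          rw [← ENNReal.ofReal_pow (mul_nonneg (sub_pos.mpr hsqrtδA).le (norm_nonneg g))]
          congr 1
          rw [hA'def]; ring
      _ ≤ (wI ^ (1/2:ℝ)) ^ (2:ℕ) := by gcongr
      _ = wI := ennreal_sqrt_sq _
  -- distance estimate
  have hf₁nn : ‖f₁‖₊ = 1 := by
    ext; simpa using hf₁
  have hdist : ∫⁻ x, (‖F x - G x‖₊ : ℝ≥0∞) ^ 2 ∂μ < ENNReal.ofReal ε := by
    have hpt : ∀ x, (‖F x - G x‖₊ : ℝ≥0∞) ^ 2 = Set.indicator Yᶜ e x := by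
      intro x
      have hFG : F x - G x = Set.indicator Yᶜ (fun x => (inner 𝕜 f₁ (F x) : 𝕜) • f₁) x := by
        simp [hGdef]
      rw [hFG]
      by_cases hx : x ∈ Yᶜ
      · rw [Set.indicator_of_mem hx, Set.indicator_of_mem hx]
        simp [hedef, nnnorm_smul, hf₁nn]
      · rw [Set.indicator_of_notMem hx, Set.indicator_of_notMem hx]
        simp
    rw [lintegral_congr hpt, lintegral_indicator hYm.compl]
    exact lt_of_lt_of_le hYtail (ENNReal.ofReal_le_ofReal hδε.le)
  -- G does not do phase retrieval
  have hnotPR : ¬ (∀ f g : H, (∀ᵐ x ∂μ, ‖(inner 𝕜 f (G x) : 𝕜)‖ = ‖(inner 𝕜 g (G x) : 𝕜)‖) →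
      ∃ c : 𝕜, ‖c‖ = 1 ∧ f = c • g) := by
    intro hPR
    have hae : ∀ᵐ x ∂μ, ‖(inner 𝕜 (f₁ + f₂) (G x) : 𝕜)‖ = ‖(inner 𝕜 (f₁ - f₂) (G x) : 𝕜)‖ := by
      filter_upwards [hf₂'] with x hx
      by_cases hxY : x ∈ Y
      · have hq : (inner 𝕜 f₂ (G x) : 𝕜) = 0 := by rw [hG_onY x hxY]; exact hx hxY
        rw [inner_add_left, inner_sub_left, hq, add_zero, sub_zero]
      · have hp : (inner 𝕜 f₁ (G x) : 𝕜) = 0 := hG_f₁ x hxY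
        rw [inner_add_left, inner_sub_left, hp, zero_add, zero_sub, norm_neg]
    obtain ⟨c, hc, hceq⟩ := hPR (f₁ + f₂) (f₁ - f₂) hae
    have hkey : ((1:𝕜) + c) • f₂ = (c - 1) • f₁ := by
      have h0 : f₁ + f₂ - c • (f₁ - f₂) = 0 := sub_eq_zero.mpr hceq
      have h1 : ((1:𝕜) + c) • f₂ - (c - 1) • f₁ = f₁ + f₂ - c • (f₁ - f₂) := by
        module
      rw [h0] at h1
      exact sub_eq_zero.mp h1
    by_cases hc1 : c = 1
    · apply hf₂ne
      rw [hc1] at hkey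
      simp only [sub_self, zero_smul] at hkey
      have h2 : ((1:𝕜) + 1) ≠ 0 := by
        norm_num
      rcases smul_eq_zero.mp hkey with h | h
      · exact absurd h h2
      · exact h
    by_cases hcm1 : c = -1
    · rw [hcm1] at hkey
      simp only [add_neg_cancel, zero_smul] at hkey
      have h2 : ((-1:𝕜) - 1) ≠ 0 := by norm_num
      rcases smul_eq_zero.mp hkey.symm with h | h
      · exact absurd h h2
      · rw [h] at hf₁
        simp at hf₁
    · have h1c : (1:𝕜) + c ≠ 0 := by
        intro h
        exact hcm1 (by linear_combination h)
      have hf₂eq : f₂ = (((1:𝕜) + c)⁻¹ * (c - 1)) • f₁ := by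
        rw [mul_smul, ← hkey, inv_smul_smul₀ h1c]
      set lam : 𝕜 := ((1:𝕜) + c)⁻¹ * (c - 1) with hlamdef
      have hlamne : lam ≠ 0 := mul_ne_zero (inv_ne_zero h1c) (sub_ne_zero.mpr hc1)
      have hker : ∀ᵐ x ∂μ, (inner 𝕜 f₁ (G x) : 𝕜) = 0 := by
        filter_upwards [hf₂'] with x hx
        by_cases hxY : x ∈ Y
        · have h0 : (inner 𝕜 f₂ (G x) : 𝕜) = 0 := by rw [hG_onY x hxY]; exact hx hxY
          rw [hf₂eq, inner_smul_left] at h0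
          rcases mul_eq_zero.mp h0 with h | h
          · exact absurd ((map_eq_zero _).mp h) hlamne
          · exact h
        · exact hG_f₁ x hxY
      have h0 : ∫⁻ x, (‖(inner 𝕜 f₁ (G x) : 𝕜)‖₊ : ℝ≥0∞) ^ 2 ∂μ = 0 := by
        calc ∫⁻ x, (‖(inner 𝕜 f₁ (G x) : 𝕜)‖₊ : ℝ≥0∞) ^ 2 ∂μ
            = ∫⁻ _, (0:ℝ≥0∞) ∂μ :=
              lintegral_congr_ae (hker.mono fun x hx => by simp [hx])
          _ = 0 := lintegral_zero
      have hlb := hlower f₁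
      rw [h0, hf₁] at hlb
      simp only [one_pow, mul_one, nonpos_iff_eq_zero, ENNReal.ofReal_eq_zero] at hlb
      linarith
  -- conclusion
  have hA'B : A' ≤ 8 * B := by
    have h2 : Real.sqrt A - Real.sqrt δ ≤ Real.sqrt A := sub_le_self _ (Real.sqrt_nonneg δ)
    have h3 : A' ≤ A := by
      calc A' = (Real.sqrt A - Real.sqrt δ) ^ 2 := hA'def
        _ ≤ (Real.sqrt A) ^ 2 := pow_le_pow_left₀ (sub_pos.mpr hsqrtδA).le h2 2
        _ = A := Real.sq_sqrt hA.le
    linarith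
  refine ⟨G, ⟨A', 8 * B, ?_⟩, ?_, hdist⟩
  · exact ⟨hA'pos, hA'B, hGmeas, fun g => ⟨hlower g, hupper g⟩⟩
  · exact hnotPR
end
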